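/- Let $\mu > r$, $\sigma > 0$, $\lambda \ge 0$, and $z > 0$. Then $u^* = \frac{1}{2\sigma^2 z}\left(-(\lambda z^2-(\mu-r)z+\sigma^2)+\sqrt{(\lambda z^2-(\mu-r)z+\sigma^2)^2+4\sigma^2 z(\mu-r)}\right)$ satisfies $u^* > 0$, $1 + z u^* > 0$, and is a root of the equation $\mu - r - \sigma^2 u + \lambda z\left(\frac{1}{1+zu} - 1\right) = 0$. -/
import Mathlib


/-- Merton's problem with jumps under logarithmic utility: the explicit formula
`u*` is positive, satisfies `1 + z u* > 0`, and solves the first-order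
condition `μ - r - σ² u + λ z (1/(1+zu) - 1) = 0`. -/
theorem stmt_7 (μ r σ lam z : ℝ) (hμr : r < μ) (hσ : 0 < σ) (hlam : 0 ≤ lam)
    (hz : 0 < z) :
    0 < (1 / (2 * σ ^ 2 * z)) *
        (-(lam * z ^ 2 - (μ - r) * z + σ ^ 2)
          + Real.sqrt ((lam * z ^ 2 - (μ - r) * z + σ ^ 2) ^ 2
              + 4 * σ ^ 2 * z * (μ - r))) ∧
    0 < 1 + z * ((1 / (2 * σ ^ 2 * z)) *
        (-(lam * z ^ 2 - (μ - r) * z + σ ^ 2)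
          + Real.sqrt ((lam * z ^ 2 - (μ - r) * z + σ ^ 2) ^ 2
              + 4 * σ ^ 2 * z * (μ - r)))) ∧
    μ - r - σ ^ 2 * ((1 / (2 * σ ^ 2 * z)) *
        (-(lam * z ^ 2 - (μ - r) * z + σ ^ 2)
          + Real.sqrt ((lam * z ^ 2 - (μ - r) * z + σ ^ 2) ^ 2
              + 4 * σ ^ 2 * z * (μ - r))))
      + lam * z * (1 / (1 + z * ((1 / (2 * σ ^ 2 * z)) *
          (-(lam * z ^ 2 - (μ - r) * z + σ ^ 2)
            + Real.sqrt ((lam * z ^ 2 - (μ - r) * z + σ ^ 2) ^ 2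
                + 4 * σ ^ 2 * z * (μ - r))))) - 1) = 0 := by
  set A := lam * z ^ 2 - (μ - r) * z + σ ^ 2 with hA
  set D := A ^ 2 + 4 * σ ^ 2 * z * (μ - r) with hD
  have hσ2 : (0:ℝ) < σ ^ 2 := by positivity
  have hp : 0 < 4 * σ ^ 2 * z * (μ - r) := by nlinarith [mul_pos (mul_pos hσ2 hz) (sub_pos.mpr hμr)]
  have hDpos : 0 < D := by rw [hD]; nlinarith [sq_nonneg A]
  set s := Real.sqrt D with hs
  have hs2 : s ^ 2 = D := Real.sq_sqrt hDpos.le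
  have hsnn : 0 ≤ s := Real.sqrt_nonneg _
  have hsA : A < s := by
    nlinarith [hs2, hD, hp, hsnn, sq_nonneg (s - A), sq_nonneg (s + A)]
  set u := (1 / (2 * σ ^ 2 * z)) * (-A + s) with hu
  have hupos : 0 < u := by
    apply mul_pos
    · positivity
    · linarith
  have h1zu : 0 < 1 + z * u := by nlinarith
  refine ⟨hupos, h1zu, ?_⟩
  -- u satisfies the quadratic σ²z u² + A u - (μ - r) = 0
  have hquad : σ ^ 2 * z * u ^ 2 + A * u - (μ - r) = 0 := by
    have h2 : (2 * σ ^ 2 * z) ≠ 0 := by positivity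
    rw [hu]
    field_simp
    nlinarith [hs2]
  have hne : 1 + z * u ≠ 0 := ne_of_gt h1zu
  field_simp
  nlinarith [hquad]
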